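/- For every λ > 0, the series Σ_{n=0}^∞ (e^{−λ} λ^n / (n+1)!) · e^{(n+1)²} diverges (is not summable). Consequently, for the fitness function f(x) = e^{x²} and the probability measure ρ = δ_1 (Dirac at 1), the expectation of the real fitness distribution σ_1^{f,ρ} = Σ_n (e^{−λ}λ^n/n!)·(h_{n+1})_*(δ_1 ∗ ρ^{∗n}), with h_k(y)=f(y)/k, is infinite; so the exponential-majoration hypothesis cannot be dropped from the finiteness theorem. -/

import Mathlib

open MeasureTheory Filter

/-- The `n`-fold convolution power of a measure on `ℝ`, with `ρ^{∗0} = δ₀`. -/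
noncomputable def convPow (ρ : Measure ℝ) : ℕ → Measure ℝ
  | 0 => Measure.dirac 0
  | n + 1 => (convPow ρ n).conv ρ

/-- The real fitness distribution of the genotype of activity `x`:
`σ_x^{f,ρ} = Σ_n (e^{−λ}λ^n/n!)·(h_{n+1})_*(δ_x ∗ ρ^{∗n})` with `h_k(y) = f(y)/k`. -/
noncomputable def sigmaX (f : ℝ → ℝ) (l x : ℝ) (ρ : Measure ℝ) : Measure ℝ :=
  Measure.sum (fun n : ℕ =>
    ENNReal.ofReal (Real.exp (-l) * l ^ n / n.factorial) •
      ((Measure.dirac x).conv (convPow ρ n)).map (fun y => f y / ((n : ℝ) + 1)))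

/-
Since `(n+1)! ≤ (n+1)^(n+1) ≤ e^((n+1)²/2)`, the `n`-th term of the series is at least
`e^(-λ + n log λ + (n+1)²/2)`, which tends to infinity, so the series diverges.
For `ρ = δ₁` every convolution power `ρ^{∗n}` is `δ_n`, so `σ₁` is the atomic measure with mass
`e^(-λ) λⁿ / n!` at `e^((n+1)²) / (n+1)`; its first absolute moment is exactly the divergent series.
-/

open Real Nat

lemma Real.self_le_exp_half (x : ℝ) : x ≤ exp (x / 2) := by
  rcases lt_or_ge x 0 with hx | hx
  · exact hx.le.trans (exp_pos _).le
  have hquarter : x / 4 + 1 ≤ exp (x / 4) := add_one_le_exp _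
  have hsq : exp (x / 2) = exp (x / 4) ^ 2 := by rw [← exp_nat_mul]; ring_nf
  rw [hsq]
  nlinarith [sq_nonneg (x / 4 - 1), pow_le_pow_left₀ (by positivity) hquarter 2]

lemma Nat.factorial_le_exp_sq_div_two (n : ℕ) : (n ! : ℝ) ≤ exp ((n : ℝ) ^ 2 / 2) :=
  calc (n ! : ℝ) ≤ (n : ℝ) ^ n := by exact_mod_cast n.factorial_le_pow
    _ ≤ exp ((n : ℝ) / 2) ^ n := pow_le_pow_left₀ n.cast_nonneg (self_le_exp_half _) n
    _ = exp ((n : ℝ) ^ 2 / 2) := by rw [← exp_nat_mul]; ring_nf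

lemma exp_le_poisson_mul_exp_sq_div_factorial {l : ℝ} (hl : 0 < l) (n : ℕ) :
    exp (-l + n * log l + ((n : ℝ) + 1) ^ 2 / 2) ≤
      exp (-l) * l ^ n / (n + 1)! * exp (((n : ℝ) + 1) ^ 2) := by
  set s : ℝ := ((n : ℝ) + 1) ^ 2
  have hfac : ((n + 1)! : ℝ) ≤ exp (s / 2) := by
    simpa using Nat.factorial_le_exp_sq_div_two (n + 1)
  calc exp (-l + n * log l + s / 2) = exp (-l) * l ^ n * exp s / exp (s / 2) := by
        rw [exp_add, exp_add, exp_nat_mul, exp_log hl, mul_div_assoc, ← exp_sub]; ring_nf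
    _ ≤ exp (-l) * l ^ n * exp s / (n + 1)! :=
        div_le_div_of_nonneg_left (by positivity) (by positivity) hfac
    _ = exp (-l) * l ^ n / (n + 1)! * exp s := by ring

lemma tendsto_poisson_mul_exp_sq_div_factorial_atTop {l : ℝ} (hl : 0 < l) :
    Tendsto (fun n : ℕ => exp (-l) * l ^ n / (n + 1)! * exp (((n : ℝ) + 1) ^ 2))
      atTop atTop := by
  refine tendsto_atTop_mono (exp_le_poisson_mul_exp_sq_div_factorial hl)
    (tendsto_exp_atTop.comp ?_)
  have hlower : ∀ n : ℕ, (n : ℝ) * (log l + n / 2) - l ≤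
      -l + n * log l + ((n : ℝ) + 1) ^ 2 / 2 := fun n => by
    nlinarith [n.cast_nonneg (α := ℝ)]
  refine tendsto_atTop_mono hlower (tendsto_atTop_add_const_right _ _ ?_)
  exact tendsto_natCast_atTop_atTop.atTop_mul_atTop₀ (tendsto_atTop_add_const_left _ _
    (tendsto_natCast_atTop_atTop.atTop_div_const two_pos))

lemma convPow_dirac (a : ℝ) (n : ℕ) : convPow (Measure.dirac a) n = Measure.dirac (n * a) := by
  induction n with
  | zero => simp [convPow]
  | succ n ih => rw [convPow, ih, Measure.dirac_conv_dirac]; push_cast; ring_nf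

lemma lintegral_sigmaX_dirac (g : ℝ → ENNReal) (f : ℝ → ℝ) (l x a : ℝ) :
    ∫⁻ y, g y ∂(sigmaX f l x (Measure.dirac a)) =
      ∑' n : ℕ, ENNReal.ofReal (exp (-l) * l ^ n / n !) * g (f (x + n * a) / (n + 1)) := by
  simp only [sigmaX, lintegral_sum_measure, lintegral_smul_measure, convPow_dirac,
    Measure.dirac_conv_dirac, Measure.map_dirac, lintegral_dirac, smul_eq_mul]

lemma lintegral_enorm_sigmaX_exp_sq_dirac_one {l : ℝ} (hl : 0 ≤ l) :
    ∫⁻ y, ‖y‖ₑ ∂(sigmaX (fun x => exp (x ^ 2)) l 1 (Measure.dirac 1)) =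
      ∑' n : ℕ, ENNReal.ofReal (exp (-l) * l ^ n / (n + 1)! * exp (((n : ℝ) + 1) ^ 2)) := by
  rw [lintegral_sigmaX_dirac]
  congr 1 with n
  rw [Real.enorm_of_nonneg (by positivity), ← ENNReal.ofReal_mul (by positivity), mul_one,
    add_comm (1 : ℝ), Nat.factorial_succ, Nat.cast_mul]
  congr 1
  field_simp
  push_cast
  ring

theorem counterexample_without_exponential_majoration
    (l : ℝ) (hl : 0 < l) :
    ¬ Summable (fun n : ℕ => Real.exp (-l) * l ^ n / (n + 1).factorial *
        Real.exp (((n : ℝ) + 1) ^ 2)) ∧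
    ¬ Integrable (fun y => y)
        (sigmaX (fun x => Real.exp (x ^ 2)) l 1 (Measure.dirac 1)) := by
  have hdiv : ¬ Summable (fun n : ℕ => Real.exp (-l) * l ^ n / (n + 1).factorial *
      Real.exp (((n : ℝ) + 1) ^ 2)) := fun hsum =>
    not_tendsto_atTop_of_tendsto_nhds hsum.tendsto_atTop_zero
      (tendsto_poisson_mul_exp_sq_div_factorial_atTop hl)
  refine ⟨hdiv, fun hint => hdiv ?_⟩
  have hfin := hint.hasFiniteIntegral
  rw [HasFiniteIntegral, lintegral_enorm_sigmaX_exp_sq_dirac_one hl.le] at hfin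
  refine (ENNReal.summable_toReal hfin.ne).congr fun n => ENNReal.toReal_ofReal ?_
  positivity
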